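/- arXiv:0802.3885 — 6 statements merged into one kernel-verified Lean document; each statement's English description precedes it below -/
import Mathlib

section
/- A finite word W over a finite alphabet has at most |W| + 1 distinct palindromic factors (including the empty word). -/
open List

variable {α : Type*} [DecidableEq α]

/-- The set of factors (contiguous subwords) of `W`. -/
def factorFinset (W : List α) : Finset (List α) := (W.inits.flatMap List.tails).toFinset

/-- A palindrome is a word equal to its reversal. -/
def Pal (u : List α) : Prop := u.reverse = u

instance : DecidablePred (Pal : List α → Prop) :=
  fun u => inferInstanceAs (Decidable (u.reverse = u))

/-- The set of palindromic factors of `W` (including the empty word). -/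
def palFactorFinset (W : List α) : Finset (List α) := (factorFinset W).filter Pal

/-- Subword complexity: the number of distinct factors of `W` of length `n`. -/
def C (W : List α) (n : ℕ) : ℕ := ((factorFinset W).filter (fun u => u.length = n)).card

/-- Palindromic complexity: number of distinct palindromic factors of `W` of length `n`. -/
def P (W : List α) (n : ℕ) : ℕ := ((palFactorFinset W).filter (fun u => u.length = n)).card

/-- A word is rich if it has exactly `|W| + 1` distinct palindromic factors. -/
def Rich (W : List α) : Prop := (palFactorFinset W).card = W.length + 1

/-- Number of occurrences of `u` as a factor of `W`. -/
def occ (u W : List α) : ℕ := ((List.range (W.length + 1)).filter (fun i => u <+: W.drop i)).length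

/-- `Z` is a complete return to `u` in `W`: a factor of `W` with exactly two
occurrences of `u`, one as a prefix and one as a suffix. -/
def CompleteReturn (u Z W : List α) : Prop := Z <:+: W ∧ u <+: Z ∧ u <:+ Z ∧ occ u Z = 2

/-- `u` is a right special factor of `W`. -/
def RightSpecial (u W : List α) : Prop :=
  ∃ x y : α, x ≠ y ∧ (u ++ [x]) <:+: W ∧ (u ++ [y]) <:+: W

/-- `R_W`: the smallest `p` such that `W` has no right special factor of length `p`. -/
noncomputable def RW (W : List α) : ℕ := sInf {p : ℕ | ∀ u : List α, u.length = p → ¬ RightSpecial u W}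

/-- `K_W`: the length of the shortest suffix of `W` occurring exactly once in `W`. -/
noncomputable def KW (W : List α) : ℕ := sInf {k : ℕ | ∃ u : List α, u <:+ W ∧ u.length = k ∧ occ u W = 1}

/-- A word is trapezoidal if `|W| = R_W + K_W`. -/
def Trapezoidal (W : List α) : Prop := W.length = RW W + KW W

/-- The minimal period of `W`. -/
noncomputable def minPeriod (W : List α) : ℕ :=
  sInf {q : ℕ | 0 < q ∧ ∀ i : ℕ, i + q < W.length → W[i]? = W[i + q]?}

/-- A binary word is balanced if the number of occurrences of a letter in two
factors of equal length differ by at most 1. -/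
def BalancedWord (W : List Bool) : Prop :=
  ∀ u v : List Bool, u <:+: W → v <:+: W → u.length = v.length →
    u.count true ≤ v.count true + 1

lemma mem_factorFinset' (u W : List α) : u ∈ factorFinset W ↔ u <:+: W := by
  simp only [factorFinset, List.mem_toFinset, List.mem_flatMap, List.mem_inits, List.mem_tails]
  constructor
  · rintro ⟨p, hp, hu⟩
    exact hu.isInfix.trans hp.isInfix
  · rintro ⟨s, t, h⟩
    exact ⟨s ++ u, ⟨t, by simpa using h⟩, ⟨s, rfl⟩⟩

lemma infix_concat' (u V : List α) (a : α) (h : u <:+: V ++ [a]) :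
    u <:+: V ∨ u <:+ V ++ [a] := by
  obtain ⟨s, t, h⟩ := h
  rcases List.eq_nil_or_concat t with rfl | ⟨t', b, rfl⟩
  · right; exact ⟨s, by simpa using h⟩
  · left
    have h2 : (s ++ u ++ t') ++ [b] = V ++ [a] := by simpa using h
    have := (List.append_inj' h2 rfl).1
    exact ⟨s, t', this⟩

lemma key_step (V : List α) (a : α) :
    (palFactorFinset (V ++ [a])).card ≤ (palFactorFinset V).card + 1 := by
  -- longest palindromic suffix
  set W := V ++ [a] with hW
  have hne : ∃ u ∈ (W.tails.toFinset.filter Pal), True := by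
    refine ⟨[a], ?_, trivial⟩
    simp only [Finset.mem_filter, List.mem_toFinset, List.mem_tails]
    exact ⟨⟨V, rfl⟩, rfl⟩
  obtain ⟨L, hLmem, hLmax⟩ := Finset.exists_max_image (W.tails.toFinset.filter Pal)
    (fun u => u.length) ⟨[a], by
      simp only [Finset.mem_filter, List.mem_toFinset, List.mem_tails]
      exact ⟨⟨V, rfl⟩, by simp [Pal]⟩⟩
  simp only [Finset.mem_filter, List.mem_toFinset, List.mem_tails] at hLmem
  obtain ⟨hLsuf, hLpal⟩ := hLmem
  have hsub : palFactorFinset W ⊆ insert L (palFactorFinset V) := by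
    intro u hu
    simp only [palFactorFinset, Finset.mem_filter, mem_factorFinset'] at hu ⊢
    obtain ⟨hufac, hupal⟩ := hu
    rcases infix_concat' u V a hufac with h | husuf
    · exact Finset.mem_insert_of_mem (by simp [palFactorFinset, Finset.mem_filter,
        mem_factorFinset', h, hupal])
    · -- u is a palindromic suffix of W
      by_cases hu : u = L
      · exact hu ▸ Finset.mem_insert_self _ _
      · refine Finset.mem_insert_of_mem ?_
        simp only [palFactorFinset, Finset.mem_filter, mem_factorFinset']
        refine ⟨?_, hupal⟩
        have hlen : u.length ≤ L.length := hLmax u (by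
          simp only [Finset.mem_filter, List.mem_toFinset, List.mem_tails]
          exact ⟨husuf, hupal⟩)
        -- u <:+ L
        have huL : u <:+ L := by
          have h1 := List.reverse_prefix.mpr husuf
          have h2 := List.reverse_prefix.mpr hLsuf
          exact List.reverse_prefix.mp
            (List.prefix_of_prefix_length_le h1 h2 (by simpa using hlen))
        -- u is a prefix of L since L palindrome
        have hupre : u <+: L := by
          have h3 := List.reverse_prefix.mpr huL
          rwa [hLpal, hupal] at h3
        -- proper prefix: L = u ++ r, r ≠ []
        obtain ⟨r, hr⟩ := hupre
        have hrne : r ≠ [] := by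
          intro h; apply hu; rw [← hr, h, List.append_nil]
        obtain ⟨r', c, rfl⟩ := List.eq_nil_or_concat r |>.resolve_left hrne
        obtain ⟨s, hs⟩ := hLsuf
        rw [← hr] at hs
        have h2 : (s ++ u ++ r') ++ [c] = V ++ [a] := by
          simpa [List.append_assoc] using hs
        have := (List.append_inj' h2 rfl).1
        exact ⟨s, r', this⟩
  calc (palFactorFinset W).card ≤ (insert L (palFactorFinset V)).card :=
        Finset.card_le_card hsub
    _ ≤ (palFactorFinset V).card + 1 := Finset.card_insert_le _ _

theorem stmt0 {α : Type*} [DecidableEq α] [Fintype α] (W : List α) :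
    (palFactorFinset W).card ≤ W.length + 1 := by
  induction W using List.reverseRecOn with
  | nil =>
      exact le_trans (Finset.card_filter_le _ _) (by simp [factorFinset])
  | append_singleton V a ih =>
      calc (palFactorFinset (V ++ [a])).card ≤ (palFactorFinset V).card + 1 := key_step V a
        _ ≤ (V.length + 1) + 1 := by omega
        _ = (V ++ [a]).length + 1 := by simp
end

section
/- A finite word W is rich if and only if for each non-empty palindromic factor u of W, every complete return to u in W is a palindrome. -/
open List

variable {α : Type*} [DecidableEq α]

/-!
A word is rich iff, for each nonempty prefix `P`, the longest palindromic suffix of `P` does not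
occur earlier in `P`: appending a letter creates at most one new palindromic factor, namely the
new longest palindromic suffix, since every shorter palindromic suffix is reflected into a prefix
of it.

If `Z` is a complete return to a palindrome `u` ending at a prefix `P` of a rich word, the longest
palindromic suffix `Q` of `P` cannot be shorter than `Z`: it would contain `u` as a prefix, so
either `u` would occur inside `Z`, or `Q = u` would occur earlier in `P`. So either `Z = Q`, or the
mirror image of `Z` inside `Q` is a complete return to `u` ending earlier, and induction applies.
Conversely, if the longest palindromic suffix `Q` of a prefix occurs earlier, the shortest suffix
starting with an earlier occurrence of `Q` is a complete return to `Q` longer than `Q`, hence not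
a palindrome.
-/

section Words

variable {α : Type*}

theorem pal_reverse_iff {l : List α} : Pal l.reverse ↔ Pal l := by
  simp only [Pal, reverse_reverse, eq_comm]

theorem Pal.prefix_of_suffix {v w : List α} (hv : Pal v) (hw : Pal w) (h : v <:+ w) : v <+: w := by
  rw [← hv, ← hw]
  exact reverse_prefix.2 h

theorem infix_of_append_eq_concat {s v t P : List α} {a : α} (h : s ++ v ++ t = P ++ [a])
    (ht : t ≠ []) : v <:+: P := by
  obtain ⟨t', b, rfl⟩ := (eq_nil_or_concat' t).resolve_left ht
  rw [← append_assoc] at h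
  exact ⟨s, t', (append_inj' h rfl).1⟩

theorem prefix_drop_iff {u W : List α} {i : ℕ} (hi : i ≤ W.length) :
    u <+: W.drop i ↔ ∃ s t, s.length = i ∧ s ++ u ++ t = W := by
  constructor
  · rintro ⟨t, ht⟩
    exact ⟨W.take i, t, by simp [hi], by rw [append_assoc, ht, take_append_drop]⟩
  · rintro ⟨s, t, rfl, rfl⟩
    exact ⟨t, by simp⟩

def IsLongestPalSuffix (Q P : List α) : Prop :=
  Q <:+ P ∧ Pal Q ∧ ∀ R, R <:+ P → Pal R → R.length ≤ Q.length

theorem exists_isLongestPalSuffix (P : List α) : ∃ Q, IsLongestPalSuffix Q P := by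
  classical
  obtain ⟨Q, hQ, hmax⟩ := Finset.exists_max_image (P.tails.filter (Pal ·)).toFinset length
    ⟨[], by simp [Pal]⟩
  simp only [mem_toFinset, mem_filter, mem_tails, decide_eq_true_eq] at hQ hmax
  exact ⟨Q, hQ.1, hQ.2, fun R hR hpal => hmax R ⟨hR, hpal⟩⟩

namespace IsLongestPalSuffix

variable {P Q R : List α}

theorem suffix_of_pal (hQ : IsLongestPalSuffix Q P) (hR : R <:+ P) (hpal : Pal R) : R <:+ Q :=
  suffix_of_suffix_length_le hR hQ.1 (hQ.2.2 R hR hpal)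

theorem unique {Q' : List α} (hQ : IsLongestPalSuffix Q P) (hQ' : IsLongestPalSuffix Q' P) :
    Q = Q' :=
  (hQ.suffix_of_pal hQ'.1 hQ'.2.1).eq_of_length
    (le_antisymm (hQ.2.2 Q' hQ'.1 hQ'.2.1) (hQ'.2.2 Q hQ.1 hQ.2.1)) |>.symm

theorem ne_nil {a : α} (hQ : IsLongestPalSuffix Q (P ++ [a])) : Q ≠ [] := by
  rintro rfl
  simpa using hQ.2.2 [a] (suffix_append P [a]) rfl

/-- A shorter palindromic suffix is a suffix, hence a prefix, of `Q`, so it occurs earlier. -/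
theorem infix_of_ne {a : α} (hQ : IsLongestPalSuffix Q (P ++ [a])) (hR : R <:+ P ++ [a])
    (hpal : Pal R) (hne : R ≠ Q) : R <:+: P := by
  obtain ⟨x, rfl⟩ := hpal.prefix_of_suffix hQ.2.1 (hQ.suffix_of_pal hR hpal)
  obtain ⟨s, hs⟩ := hQ.1
  exact infix_of_append_eq_concat (by rw [← hs, append_assoc]) (by rintro rfl; simp at hne)

end IsLongestPalSuffix

/-- `Z` is a complete return to `u`, with the count of occurrences replaced by decompositions. -/
def IsCompleteReturn (u Z : List α) : Prop :=
  u <+: Z ∧ u <:+ Z ∧ u.length < Z.length ∧ ∀ s t, s ++ u ++ t = Z → s = [] ∨ t = []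

theorem IsCompleteReturn.reverse {u Z : List α} (hu : Pal u) (h : IsCompleteReturn u Z) :
    IsCompleteReturn u Z.reverse := by
  obtain ⟨hp, hs, hlt, hfree⟩ := h
  refine ⟨?_, ?_, by simpa using hlt, fun s t hst => ?_⟩
  · rw [← hu]
    exact reverse_prefix.2 hs
  · rw [← hu]
    exact reverse_suffix.2 hp
  · have : t.reverse ++ u ++ s.reverse = Z := by
      rw [← reverse_reverse Z, ← hst]
      simp [show u.reverse = u from hu]
    simpa [or_comm] using hfree _ _ this

/-- The shortest suffix of `V` having `u` as a proper prefix is a complete return to `u`. -/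
theorem exists_isCompleteReturn_suffix {u V : List α} (hs : u <:+ V)
    (h : ∃ Z, Z <:+ V ∧ u <+: Z ∧ u.length < Z.length) :
    ∃ Z, Z <:+ V ∧ IsCompleteReturn u Z := by
  classical
  have hex : ∃ n, ∃ Z, Z <:+ V ∧ u <+: Z ∧ u.length < Z.length ∧ Z.length = n :=
    let ⟨Z, hZ⟩ := h
    ⟨_, Z, hZ.1, hZ.2.1, hZ.2.2, rfl⟩
  obtain ⟨Z, hZV, hp, hlt, hn⟩ := Nat.find_spec hex
  refine ⟨Z, hZV, hp, suffix_of_suffix_length_le hs hZV hlt.le, hlt, fun s t hst => ?_⟩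
  by_contra! hne
  have hmin := Nat.find_min' hex ⟨u ++ t,
    (by rw [← hst, append_assoc]; exact suffix_append _ _ : u ++ t <:+ Z).trans hZV,
    prefix_append u t, by simpa using length_pos_iff.2 hne.2, rfl⟩
  have hlen := congrArg length hst
  simp only [length_append] at hlen hmin
  have := length_pos_iff.2 hne.1
  omega

/-- If `Q` were a proper suffix of `Z`, then `u`, a prefix of `Q`, would occur inside `Z`,
or `Q = u` would occur earlier. -/
theorem IsCompleteReturn.suffix_of_isLongestPalSuffix {u Z P Q : List α} {a : α}
    (hu : Pal u) (hZ : IsCompleteReturn u Z) (hZP : Z <:+ P ++ [a])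
    (hQ : IsLongestPalSuffix Q (P ++ [a])) (hnew : ¬ Q <:+: P) : Z <:+ Q := by
  obtain ⟨hup, hus, -, hfree⟩ := hZ
  have huQ : u <+: Q := hu.prefix_of_suffix hQ.2.1 (hQ.suffix_of_pal (hus.trans hZP) hu)
  rcases suffix_or_suffix_of_suffix hZP hQ.1 with hZQ | ⟨y, rfl⟩
  · exact hZQ
  obtain ⟨x, rfl⟩ := huQ
  rcases eq_or_ne y [] with rfl | hy
  · exact suffix_rfl
  rcases eq_or_ne x [] with rfl | hx
  · obtain ⟨z, hz⟩ := hup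
    obtain ⟨pz, hpz⟩ := hZP
    have hz_ne : z ≠ [] := by
      rintro rfl
      exact hy (by simpa using congrArg length hz)
    refine absurd (infix_of_append_eq_concat (s := pz) (a := a) ?_ hz_ne) (by simpa using hnew)
    rw [← hpz, ← hz, append_assoc]
  · simpa [hy, hx] using hfree y x (append_assoc y u x)

end Words

def occurrences (u W : List α) : Finset ℕ :=
  (Finset.range (W.length + 1)).filter fun i => u <+: W.drop i

theorem occ_eq_card_occurrences (u W : List α) : occ u W = (occurrences u W).card := rfl

theorem mem_occurrences {u W : List α} {i : ℕ} :
    i ∈ occurrences u W ↔ ∃ s t, s.length = i ∧ s ++ u ++ t = W := by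
  simp only [occurrences, Finset.mem_filter, Finset.mem_range]
  constructor
  · rintro ⟨hi, h⟩
    exact (prefix_drop_iff (by omega)).1 h
  · rintro ⟨s, t, rfl, rfl⟩
    exact ⟨by simp, (prefix_drop_iff (by simp)).2 ⟨s, t, rfl, rfl⟩⟩

theorem zero_mem_occurrences {u W : List α} (h : u <+: W) : 0 ∈ occurrences u W :=
  let ⟨t, ht⟩ := h
  mem_occurrences.2 ⟨[], t, rfl, ht⟩

theorem sub_mem_occurrences {u W : List α} (h : u <:+ W) :
    W.length - u.length ∈ occurrences u W := by
  obtain ⟨s, rfl⟩ := h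
  exact mem_occurrences.2 ⟨s, [], by simp, by simp⟩

theorem occ_eq_two_iff {u Z : List α} (hp : u <+: Z) (hs : u <:+ Z) :
    occ u Z = 2 ↔ u.length < Z.length ∧ ∀ s t, s ++ u ++ t = Z → s = [] ∨ t = [] := by
  rw [occ_eq_card_occurrences]
  have first_mem := zero_mem_occurrences hp
  have last_mem := sub_mem_occurrences hs
  constructor
  · intro h2
    refine ⟨?_, fun s t hst => ?_⟩
    · by_contra! hle
      have hS : occurrences u Z ⊆ {0} := fun i hi => by
        obtain ⟨s, t, rfl, hst⟩ := mem_occurrences.1 hi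
        have := congrArg length hst
        simp only [length_append] at this
        simp only [Finset.mem_singleton]
        omega
      simpa [h2] using Finset.card_le_card hS
    · by_contra! hne
      have hlen := congrArg length hst
      simp only [length_append] at hlen
      have := length_pos_iff.2 hne.1
      have := length_pos_iff.2 hne.2
      have h3 : ({0, s.length, Z.length - u.length} : Finset ℕ).card = 3 := by
        rw [Finset.card_insert_of_notMem (by simp; omega), Finset.card_pair (by omega)]
      have mid_mem : s.length ∈ occurrences u Z := mem_occurrences.2 ⟨s, t, rfl, hst⟩
      have := Finset.card_le_card (s := {0, s.length, Z.length - u.length})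
        (t := occurrences u Z) (by simp [Finset.insert_subset_iff, first_mem, mid_mem, last_mem])
      omega
  · rintro ⟨hlt, hfree⟩
    have hS : occurrences u Z = {0, Z.length - u.length} := by
      refine Finset.Subset.antisymm (fun i hi => ?_)
        (by simp [Finset.insert_subset_iff, first_mem, last_mem])
      obtain ⟨s, t, rfl, hst⟩ := mem_occurrences.1 hi
      have hlen := congrArg length hst
      simp only [length_append] at hlen
      rcases hfree s t hst with rfl | rfl <;> simp at hlen ⊢
      omega
    rw [hS, Finset.card_pair (by omega)]

theorem completeReturn_iff {u Z W : List α} :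
    CompleteReturn u Z W ↔ Z <:+: W ∧ IsCompleteReturn u Z := by
  constructor
  · rintro ⟨hZ, hp, hs, h2⟩
    exact ⟨hZ, hp, hs, (occ_eq_two_iff hp hs).1 h2⟩
  · rintro ⟨hZ, hp, hs, hrest⟩
    exact ⟨hZ, hp, hs, (occ_eq_two_iff hp hs).2 hrest⟩

theorem mem_palFactorFinset {u W : List α} : u ∈ palFactorFinset W ↔ u <:+: W ∧ Pal u := by
  simp only [palFactorFinset, factorFinset, Finset.mem_filter, mem_toFinset, mem_flatMap, mem_inits,
    mem_tails, infix_iff_suffix_prefix]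
  exact and_congr_left' ⟨fun ⟨t, ht, hu⟩ => ⟨t, hu, ht⟩,
    fun ⟨t, hu, ht⟩ => ⟨t, ht, hu⟩⟩

theorem palFactorFinset_nil : palFactorFinset ([] : List α) = {[]} := by
  ext u
  simp only [mem_palFactorFinset, infix_nil, Finset.mem_singleton, and_iff_left_iff_imp]
  rintro rfl
  rfl

theorem palFactorFinset_concat {P Q : List α} {a : α} (hQ : IsLongestPalSuffix Q (P ++ [a])) :
    palFactorFinset (P ++ [a]) = insert Q (palFactorFinset P) := by
  ext v
  simp only [mem_palFactorFinset, Finset.mem_insert, infix_concat_iff]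
  constructor
  · rintro ⟨hv | hv, hpal⟩
    · by_cases hvQ : v = Q
      · exact .inl hvQ
      · exact .inr ⟨hQ.infix_of_ne hv hpal hvQ, hpal⟩
    · exact .inr ⟨hv, hpal⟩
  · rintro (rfl | ⟨hv, hpal⟩)
    · exact ⟨.inl hQ.1, hQ.2.1⟩
    · exact ⟨.inr hv, hpal⟩

theorem card_palFactorFinset_le (W : List α) : (palFactorFinset W).card ≤ W.length + 1 := by
  induction W using reverseRecOn with
  | nil => simp [palFactorFinset_nil]
  | append_singleton W a ih =>
    obtain ⟨Q, hQ⟩ := exists_isLongestPalSuffix (W ++ [a])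
    rw [palFactorFinset_concat hQ, length_append, length_singleton]
    exact (Finset.card_insert_le _ _).trans (by omega)

theorem rich_concat_iff {P Q : List α} {a : α} (hQ : IsLongestPalSuffix Q (P ++ [a])) :
    Rich (P ++ [a]) ↔ Rich P ∧ ¬ Q <:+: P := by
  have hle := card_palFactorFinset_le P
  unfold Rich
  rw [palFactorFinset_concat hQ, length_append, length_singleton]
  by_cases hQP : Q <:+: P
  · rw [Finset.insert_eq_of_mem (mem_palFactorFinset.2 ⟨hQP, hQ.2.1⟩)]
    simp only [hQP, not_true_eq_false, and_false, iff_false]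
    omega
  · rw [Finset.card_insert_of_notMem fun h => hQP (mem_palFactorFinset.1 h).1]
    simp [hQP]

theorem rich_iff_forall_prefix (W : List α) :
    Rich W ↔
      ∀ P a, P ++ [a] <+: W → ∀ Q, IsLongestPalSuffix Q (P ++ [a]) → ¬ Q <:+: P := by
  induction W using reverseRecOn with
  | nil => simp [Rich, palFactorFinset_nil]
  | append_singleton W b ih =>
    obtain ⟨Q₀, hQ₀⟩ := exists_isLongestPalSuffix (W ++ [b])
    rw [rich_concat_iff hQ₀, ih]
    constructor
    · rintro ⟨hW, hnew⟩ P a hPa Q hQ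
      rcases prefix_concat_iff.1 hPa with h | h
      · obtain ⟨rfl, hab⟩ := append_inj' h rfl
        obtain rfl : a = b := by simpa using hab
        rwa [hQ.unique hQ₀]
      · exact hW P a h Q hQ
    · intro h
      exact ⟨fun P a hPa => h P a (hPa.trans (prefix_append W [b])),
        h W b prefix_rfl Q₀ hQ₀⟩

theorem Rich.pal_of_isCompleteReturn {W P u Z : List α} (hW : Rich W) (hPW : P <+: W)
    (hZP : Z <:+ P) (hu : Pal u) (hZ : IsCompleteReturn u Z) : Pal Z := by
  have huni := (rich_iff_forall_prefix W).1 hW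
  induction hn : P.length using Nat.strong_induction_on generalizing P Z with
  | _ n ih =>
  obtain ⟨P, a, rfl⟩ := (eq_nil_or_concat' P).resolve_left fun h => by
    subst h
    simpa [suffix_nil.1 hZP] using hZ.2.2.1
  obtain ⟨Q, hQ⟩ := exists_isLongestPalSuffix (P ++ [a])
  obtain ⟨w, hw⟩ : Z.reverse <+: Q := by
    rw [← hQ.2.1]
    exact reverse_prefix.2 (hZ.suffix_of_isLongestPalSuffix hu hZP hQ (huni P a hPW Q hQ))
  rw [← pal_reverse_iff]
  rcases eq_or_ne w [] with rfl | hw_ne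
  · rw [append_nil] at hw
    rw [hw]
    exact hQ.2.1
  obtain ⟨pre, hpre⟩ := hQ.1
  refine ih _ ?_ (P := pre ++ Z.reverse) ?_ (suffix_append _ _) (hZ.reverse hu) rfl
  · have h1 := congrArg length hpre
    have h2 := congrArg length hw
    simp only [length_append, length_reverse, length_singleton] at h1 h2 hn ⊢
    have := length_pos_iff.2 hw_ne
    omega
  · exact (prefix_append _ w).trans (by rw [append_assoc, hw, hpre]; exact hPW)

theorem stmt2 {α : Type*} [DecidableEq α] (W : List α) :
    Rich W ↔ ∀ u : List α, u ≠ [] → u <:+: W → Pal u →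
      ∀ Z : List α, CompleteReturn u Z W → Pal Z := by
  constructor
  · intro hW u _ _ hpal Z hZ
    obtain ⟨⟨s, t, hst⟩, hcr⟩ := completeReturn_iff.1 hZ
    exact hW.pal_of_isCompleteReturn ⟨t, hst⟩ (suffix_append s Z) hpal hcr
  · intro h
    refine (rich_iff_forall_prefix W).2 fun P a hPa Q hQ ⟨s, t, hst⟩ => ?_
    obtain ⟨Z, hZV, hZ⟩ := exists_isCompleteReturn_suffix hQ.1
      ⟨Q ++ t ++ [a], ⟨s, by rw [← hst]; simp⟩, ⟨t ++ [a], by simp⟩, by simp⟩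
    have hZpal : Pal Z := h Q hQ.ne_nil (hQ.1.isInfix.trans hPa.isInfix) hQ.2.1 Z
      (completeReturn_iff.2 ⟨hZV.isInfix.trans hPa.isInfix, hZ⟩)
    exact absurd (hQ.2.2 Z hZV hZpal) (not_le.2 hZ.2.2.1)
end

section
/- For any finite word W, the minimal period of W satisfies π_W ≥ R_W + 1, where R_W is the smallest integer p such that W has no right special factor of length p. -/
open List

variable {α : Type*} [DecidableEq α]

/-!
A word with period `q` is, on every window of length `q`, a cyclic shift of its prefix of length
`q`: sliding the window by one drops a letter and appends the same letter. So all factors of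
length `q` are permutations of each other, and if `u ++ [x]` and `u ++ [y]` both occur with
`|u| = q - 1`, cancelling `u` leaves `[x] ~ [y]`, i.e. `x = y`.
-/

def IsPeriod {α : Type*} (W : List α) (q : ℕ) : Prop :=
  ∀ i : ℕ, i + q < W.length → W[i]? = W[i + q]?

theorem minPeriod_spec {α : Type*} (W : List α) : 0 < minPeriod W ∧ IsPeriod W (minPeriod W) :=
  Nat.sInf_mem (s := {q | 0 < q ∧ IsPeriod W q})
    ⟨W.length + 1, Nat.succ_pos _, fun _ _ => by omega⟩

namespace IsPeriod

variable {α : Type*} {W : List α} {q : ℕ}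

theorem take_drop_succ_perm (hW : IsPeriod W q) {i : ℕ} (hi : i + q < W.length) :
    ((W.drop (i + 1)).take q).Perm ((W.drop i).take q) := by
  obtain ⟨a, r, hr⟩ : ∃ a r, W.drop i = a :: r :=
    List.exists_cons_of_ne_nil (by rw [Ne, List.drop_eq_nil_iff]; omega)
  have hrW : W.drop (i + 1) = r := by rw [← List.drop_drop, hr, List.drop_one, List.tail_cons]
  rcases q with _ | k
  · simp
  have hlast : r[k]? = some a := by
    rw [← hrW, List.getElem?_drop, show i + 1 + k = i + (k + 1) by omega, ← hW i hi,
      ← List.head?_drop, hr, List.head?_cons]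
  rw [hrW, hr, List.take_succ_cons, List.take_add_one, hlast]
  exact List.perm_append_singleton a _

theorem take_drop_perm_take (hW : IsPeriod W q) {i : ℕ} (hi : i + q ≤ W.length) :
    ((W.drop i).take q).Perm (W.take q) := by
  induction i with
  | zero => simp
  | succ i ih => exact (hW.take_drop_succ_perm (by omega)).trans (ih (by omega))

theorem perm_of_isInfix (hW : IsPeriod W q) {u v : List α} (hu : u <:+: W) (hv : v <:+: W)
    (hul : u.length = q) (hvl : v.length = q) : u.Perm v := by
  have perm_prefix : ∀ w : List α, w <:+: W → w.length = q → w.Perm (W.take q) := by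
    rintro w ⟨s, t, rfl⟩ rfl
    simpa using hW.take_drop_perm_take (i := s.length) (by simp)
  exact (perm_prefix u hu hul).trans (perm_prefix v hv hvl).symm

theorem not_rightSpecial {u : List α} (hW : IsPeriod W (u.length + 1)) : ¬ RightSpecial u W := by
  rintro ⟨x, y, hxy, hx, hy⟩
  have hperm := hW.perm_of_isInfix hx hy (by simp) (by simp)
  exact hxy (List.singleton_perm_singleton.mp ((List.perm_append_left_iff u).mp hperm))

end IsPeriod

theorem stmt4 {α : Type*} [DecidableEq α] (W : List α) : RW W + 1 ≤ minPeriod W := by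
  obtain ⟨hpos, hper⟩ := minPeriod_spec W
  have hRW : RW W ≤ minPeriod W - 1 := Nat.sInf_le fun u hu =>
    IsPeriod.not_rightSpecial (by rwa [hu, Nat.sub_add_cancel hpos])
  omega
end

section
/- The word aabbaa is rich but not trapezoidal. -/
open List

variable {α : Type*} [DecidableEq α]

theorem stmt6 :
    Rich [false, false, true, true, false, false] ∧
    ¬ Trapezoidal [false, false, true, true, false, false] := by
  constructor
  · unfold Rich; decide
  · intro h
    have hR : RW [false, false, true, true, false, false] ≤ 2 := by
      apply Nat.sInf_le
      intro u hu hRS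
      match u, hu with
      | [a, b], _ =>
        obtain ⟨x, y, hxy, h1, h2⟩ := hRS
        revert hxy h1 h2
        revert a b x y
        decide
    have hK : KW [false, false, true, true, false, false] ≤ 3 := by
      apply Nat.sInf_le
      exact ⟨[true, false, false], by decide, rfl, by decide⟩
    unfold Trapezoidal at h
    simp only [List.length] at h
    omega
end

section
/- The word aaabab is trapezoidal but is not a factor of any Sturmian word (it is not balanced). -/
open List

variable {α : Type*} [DecidableEq α]

theorem stmt7 :
    Trapezoidal [true, true, true, false, true, false] ∧
    ¬ BalancedWord [true, true, true, false, true, false] := by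
  constructor
  · have hRW : RW [true, true, true, false, true, false] = 3 := by
      have h3 : 3 ∈ {p : ℕ | ∀ u : List Bool, u.length = p →
          ¬ RightSpecial u [true, true, true, false, true, false]} := by
        intro u hu
        rcases u with _ | ⟨a, _ | ⟨b, _ | ⟨c, _ | ⟨d, t⟩⟩⟩⟩ <;> simp at hu
        rintro ⟨x, y, hxy, h1, h2⟩
        cases a <;> cases b <;> cases c <;> cases x <;> cases y <;>
          revert hxy h1 h2 <;> decide
      have hne : {p : ℕ | ∀ u : List Bool, u.length = p →
          ¬ RightSpecial u [true, true, true, false, true, false]}.Nonempty := ⟨3, h3⟩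
      have hmem := Nat.sInf_mem hne
      have hle : sInf {p : ℕ | ∀ u : List Bool, u.length = p →
          ¬ RightSpecial u [true, true, true, false, true, false]} ≤ 3 := Nat.sInf_le h3
      unfold RW
      set n := sInf {p : ℕ | ∀ u : List Bool, u.length = p →
          ¬ RightSpecial u [true, true, true, false, true, false]} with hn
      interval_cases n
      · exact absurd (hmem ([] : List Bool) rfl)
          (by intro h; exact h ⟨true, false, by decide, by decide, by decide⟩)
      · exact absurd (hmem [true] rfl)
          (by intro h; exact h ⟨true, false, by decide, by decide, by decide⟩)
      · exact absurd (hmem [true, true] rfl)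
          (by intro h; exact h ⟨true, false, by decide, by decide, by decide⟩)
      · rfl
    have hKW : KW [true, true, true, false, true, false] = 3 := by
      have h3 : 3 ∈ {k : ℕ | ∃ u : List Bool, u <:+ [true, true, true, false, true, false] ∧
          u.length = k ∧ occ u [true, true, true, false, true, false] = 1} :=
        ⟨[false, true, false], by decide, rfl, by decide⟩
      have hne : {k : ℕ | ∃ u : List Bool, u <:+ [true, true, true, false, true, false] ∧
          u.length = k ∧ occ u [true, true, true, false, true, false] = 1}.Nonempty := ⟨3, h3⟩
      have hmem := Nat.sInf_mem hne
      have hle : sInf {k : ℕ | ∃ u : List Bool, u <:+ [true, true, true, false, true, false] ∧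
          u.length = k ∧ occ u [true, true, true, false, true, false] = 1} ≤ 3 := Nat.sInf_le h3
      unfold KW
      set n := sInf {k : ℕ | ∃ u : List Bool, u <:+ [true, true, true, false, true, false] ∧
          u.length = k ∧ occ u [true, true, true, false, true, false] = 1} with hn
      have key : ∀ m < 3, ¬ ∃ u : List Bool, u <:+ [true, true, true, false, true, false] ∧
          u.length = m ∧ occ u [true, true, true, false, true, false] = 1 := by
        rintro m hm ⟨u, hsuf, hlen, hocc⟩
        have heq : u = List.drop ((6 : ℕ) - m) [true, true, true, false, true, false] := by
          have := hsuf
          rw [List.suffix_iff_eq_drop] at this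
          simpa [hlen] using this
        interval_cases m <;> simp_all <;> revert hocc <;> decide
      interval_cases n
      · exact absurd hmem (key 0 (by norm_num))
      · exact absurd hmem (key 1 (by norm_num))
      · exact absurd hmem (key 2 (by norm_num))
      · rfl
    unfold Trapezoidal
    rw [hRW, hKW]; rfl
  · intro h
    have := h [true, true, true] [false, true, false] (by decide) (by decide) rfl
    simp at this
end

section
/- If a finite binary word W is not balanced, then there exists a palindrome U such that both aUa and bUb are factors of W. -/
open List

variable {α : Type*} [DecidableEq α]

/-! Take a pair of factors `u`, `v` of `W` of minimal length `n` with `|u|₁ ≥ |v|₁ + 2`.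
All pairs of factors of length `< n` are balanced, so trimming a letter from either end of
`u` and `v` forces `u = 1M1` and `v = 0N0` with `|M|₁ ≥ |N|₁`. Comparing `1·(prefix of M)` with
`0·(prefix of N)`, and `(suffix of M)·1` with `(suffix of N)·0`, shows that `M` and `N` have the
same number of `1`s in every prefix, so `M = N`. Comparing a prefix of `1M1` with the suffix of
`0M0` of the same length, and vice versa, shows in the same way that `M` and its reversal agree
on the number of `1`s in every prefix, so `M` is a palindrome. -/

def BalancedBelow (W : List Bool) (n : ℕ) : Prop :=
  ∀ u v : List Bool, u <:+: W → v <:+: W → u.length = v.length → u.length < n →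
    u.count true ≤ v.count true + 1

lemma exists_cons_append_singleton {α : Type*} {l : List α} (h : 2 ≤ l.length) :
    ∃ a M b, l = a :: (M ++ [b]) := by
  match l, h with
  | a :: x :: xs, _ => exact ⟨a, (x :: xs).dropLast, (x :: xs).getLast (cons_ne_nil _ _),
      by rw [dropLast_append_getLast]⟩

lemma cons_take_infix {α : Type*} (a b : α) (M : List α) (i : ℕ) :
    a :: M.take i <:+: a :: (M ++ [b]) :=
  ((prefix_cons_inj a).mpr ((M.take_prefix i).trans (M.prefix_append _))).isInfix

lemma drop_append_singleton_infix {α : Type*} (a b : α) (M : List α) (i : ℕ) :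
    M.drop i ++ [b] <:+: a :: (M ++ [b]) :=
  IsSuffix.isInfix ⟨a :: M.take i, by rw [cons_append, ← append_assoc, take_append_drop]⟩

lemma eq_of_count_true_take_eq {x y : List Bool} (hl : x.length = y.length)
    (h : ∀ i ≤ x.length, (x.take i).count true = (y.take i).count true) : x = y := by
  induction x generalizing y with
  | nil => exact (length_eq_zero_iff.mp hl.symm).symm
  | cons a x ih =>
    obtain _ | ⟨b, y⟩ := y
    · simp at hl
    obtain rfl : a = b := by
      have := h 1 (by simp)
      cases a <;> cases b <;> simp_all
    congr 1
    refine ih (by simpa using hl) fun i hi => ?_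
    simpa [count_cons] using h (i + 1) (by simp [hi])

lemma exists_minimal_unbalanced_pair {W : List Bool} (h : ¬ BalancedWord W) :
    ∃ u v : List Bool, u <:+: W ∧ v <:+: W ∧ u.length = v.length ∧
      v.count true + 2 ≤ u.count true ∧ BalancedBelow W u.length := by
  classical
  have hex : ∃ n, ∃ u v : List Bool, u <:+: W ∧ v <:+: W ∧ u.length = n ∧ v.length = n ∧
      v.count true + 2 ≤ u.count true := by
    simp only [BalancedWord, not_forall, not_le] at h
    obtain ⟨u, v, hu, hv, hl, hc⟩ := h
    exact ⟨_, u, v, hu, hv, rfl, hl.symm, hc⟩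
  obtain ⟨u, v, hu, hv, hun, hvn, hc⟩ := Nat.find_spec hex
  refine ⟨u, v, hu, hv, hun.trans hvn.symm, hc, fun x y hx hy hl hlt => ?_⟩
  by_contra! hxy
  exact Nat.find_min hex (hun ▸ hlt) ⟨x, y, hx, hy, rfl, hl.symm, hxy⟩

namespace BalancedBelow

variable {W : List Bool} {n : ℕ}

/-- Stated up to permutation so that the extra letters may sit at either end. -/
lemma count_true_le (h : BalancedBelow W n) {x y x' y' : List Bool}
    (hx : x' <:+: W) (hy : y' <:+: W) (hxx' : x' ~ true :: x) (hyy' : y' ~ false :: y)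
    (hl : x.length = y.length) (hn : x.length + 1 < n) :
    x.count true ≤ y.count true := by
  have := h x' y' hx hy (by simp [hxx'.length_eq, hyy'.length_eq, hl])
    (by simpa [hxx'.length_eq] using hn)
  simpa [hxx'.count_eq, hyy'.count_eq] using this

lemma exists_eq_of_unbalanced {u v : List Bool} (h : BalancedBelow W u.length)
    (hu : u <:+: W) (hv : v <:+: W) (hl : u.length = v.length)
    (hc : v.count true + 2 ≤ u.count true) :
    ∃ M N, u = true :: (M ++ [true]) ∧ v = false :: (N ++ [false]) := by
  have h2 : 2 ≤ u.length := by
    have := u.count_le_length (a := true)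
    omega
  obtain ⟨a, M, b, rfl⟩ := exists_cons_append_singleton h2
  obtain ⟨c, N, d, rfl⟩ := exists_cons_append_singleton (hl ▸ h2)
  have hMN : M.length = N.length := by simpa using hl
  have hinit := h (a :: M) (c :: N) ((prefix_append _ [b]).isInfix.trans (by simpa using hu))
    ((prefix_append _ [d]).isInfix.trans (by simpa using hv)) (by simp [hMN]) (by simp)
  have htail := h (M ++ [b]) (N ++ [d]) ((suffix_cons a _).isInfix.trans hu)
    ((suffix_cons c _).isInfix.trans hv) (by simp [hMN]) (by simp)
  cases a <;> cases b <;> cases c <;> cases d <;> simp_all <;> omega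

lemma eq_of_borders {M N : List Bool} (h : BalancedBelow W (M.length + 2))
    (hu : true :: (M ++ [true]) <:+: W) (hv : false :: (N ++ [false]) <:+: W)
    (hl : M.length = N.length) (hc : N.count true ≤ M.count true) : M = N := by
  refine eq_of_count_true_take_eq hl fun i hi => ?_
  have hpre : (M.take i).count true ≤ (N.take i).count true :=
    h.count_true_le ((cons_take_infix _ _ M i).trans hu) ((cons_take_infix _ _ N i).trans hv)
      (Perm.refl _) (Perm.refl _) (by simp [hl]) (by simp)
  have hsuf : (M.drop i).count true ≤ (N.drop i).count true :=
    h.count_true_le ((drop_append_singleton_infix _ _ M i).trans hu)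
      ((drop_append_singleton_infix _ _ N i).trans hv)
      (perm_append_singleton _ _) (perm_append_singleton _ _) (by simp [hl]) (by simp)
  have hM := congrArg (count true) (M.take_append_drop i)
  have hN := congrArg (count true) (N.take_append_drop i)
  rw [count_append] at hM hN
  omega

lemma pal_of_borders {M : List Bool} (h : BalancedBelow W (M.length + 2))
    (hu : true :: (M ++ [true]) <:+: W) (hv : false :: (M ++ [false]) <:+: W) : Pal M := by
  refine eq_of_count_true_take_eq (by simp) fun i hi => ?_
  rw [take_reverse, count_reverse]
  have hle : (M.take i).count true ≤ (M.drop (M.length - i)).count true :=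
    h.count_true_le ((cons_take_infix _ _ M i).trans hu)
      ((drop_append_singleton_infix _ _ M _).trans hv)
      (Perm.refl _) (perm_append_singleton _ _) (by simp at hi ⊢; omega) (by simp)
  have hge : (M.drop (M.length - i)).count true ≤ (M.take i).count true :=
    h.count_true_le ((drop_append_singleton_infix _ _ M _).trans hu)
      ((cons_take_infix _ _ M i).trans hv)
      (perm_append_singleton _ _) (Perm.refl _) (by simp at hi ⊢; omega) (by simp)
  omega

end BalancedBelow

theorem stmt14 (W : List Bool) (h : ¬ BalancedWord W) :
    ∃ U : List Bool, Pal U ∧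
      (true :: (U ++ [true])) <:+: W ∧ (false :: (U ++ [false])) <:+: W := by
  obtain ⟨u, v, hu, hv, hl, hc, hmin⟩ := exists_minimal_unbalanced_pair h
  obtain ⟨M, N, rfl, rfl⟩ := hmin.exists_eq_of_unbalanced hu hv hl hc
  have hmin : BalancedBelow W (M.length + 2) := by simpa using hmin
  obtain rfl : M = N := hmin.eq_of_borders hu hv (by simpa using hl) (by simpa [count_cons] using hc)
  exact ⟨M, hmin.pal_of_borders hu hv, hu, hv⟩
end
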